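/- Let \(H \le \overline{B}_6\) be the subgroup of bicoloured braids, i.e., the preimage under the permutation homomorphism \(\pi : \overline{B}_6 \to S_6\) of the subgroup of permutations mapping the set \(\{1,2,3\}\) to itself. Then \(H\) is isomorphic to the free product \(A * A\) of two copies of the group \(A\). -/

import Mathlib

/-- The defining relations of the twin (planar braid) group on `n + 1` strands,
with generators `σ₁, …, σ_n` indexed by `Fin n`: the squares of the generators
and the commutators of pairs of generators at distance greater than one. -/
def twinRels (n : ℕ) : Set (FreeGroup (Fin n)) :=
  {r | (∃ i : Fin n, r = .of i * .of i) ∨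
    ∃ i j : Fin n, (i : ℕ) + 1 < (j : ℕ) ∧
      r = .of i * .of j * (.of i)⁻¹ * (.of j)⁻¹}

/-- The twin (planar braid) group `B̄_{n+1}` on `n + 1` strands. -/
abbrev TwinGroup (n : ℕ) := PresentedGroup (twinRels n)

theorem twinRels_hold (n : ℕ) :
    ∀ r ∈ twinRels n,
      FreeGroup.lift (fun i : Fin n => Equiv.swap (i.castSucc) (i.succ)) r = 1 := by
  rintro r (⟨i, rfl⟩ | ⟨i, j, hij, rfl⟩)
  · simp only [map_mul, FreeGroup.lift_apply_of]
    exact Equiv.swap_mul_self _ _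
  · simp only [map_mul, map_inv, FreeGroup.lift_apply_of]
    have hd : (Equiv.swap (i.castSucc) (i.succ)).Disjoint
        (Equiv.swap (j.castSucc) (j.succ)) := by
      intro x
      by_cases h1 : x = i.castSucc
      · right; subst h1
        apply Equiv.swap_apply_of_ne_of_ne <;> simp [Fin.ext_iff] <;> omega
      by_cases h2 : x = i.succ
      · right; subst h2
        apply Equiv.swap_apply_of_ne_of_ne <;> simp [Fin.ext_iff] <;> omega
      · left; exact Equiv.swap_apply_of_ne_of_ne h1 h2
    rw [hd.commute.eq]
    group

/-- The permutation homomorphism of the twin group on `n + 1` strands,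
sending `σ_i` to the adjacent transposition `(i, i+1)`. -/
def twinPerm (n : ℕ) : TwinGroup n →* Equiv.Perm (Fin (n + 1)) :=
  PresentedGroup.toGroup (twinRels_hold n)

/-- The pairs of indices (0-based: `aᵢ ↦ i - 1`) of commuting generators of the group `A`:
these encode the commutation relations `a₁a₃ = a₃a₁`, `a₁a₄ = a₄a₁`, `a₂a₃ = a₃a₂`,
`a₂a₄ = a₄a₂`, `a₁a₇ = a₇a₁`, `a₁a₈ = a₈a₁`, `a₄a₅ = a₅a₄`, `a₄a₆ = a₆a₄`, `a₅a₈ = a₈a₅`. -/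
def commPairs : List (Fin 8 × Fin 8) :=
  [(0, 2), (0, 3), (1, 2), (1, 3), (0, 6), (0, 7), (3, 4), (3, 5), (4, 7)]

/-- The defining relations of the group `A`: the generators `a₁, …, a₈` (indexed by `Fin 8`)
are involutions, and the pairs listed in `commPairs` commute. -/
def ARels : Set (FreeGroup (Fin 8)) :=
  {r | (∃ i : Fin 8, r = .of i * .of i) ∨
    ∃ p ∈ commPairs, r = .of p.1 * .of p.2 * (.of p.1)⁻¹ * (.of p.2)⁻¹}

/-- The group `A`: the graph product of 8 groups of order two determined by the
graph with edges `commPairs`. -/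
abbrev GroupA := PresentedGroup ARels

/-!
The bicoloured subgroup `H` has index 20: its cosets correspond to the 3-element subsets of
`Fin 6`. Fix a Schreier transversal `t_C` and write the Schreier generators
`t_C⁻¹ σᵢ t_{σᵢC}` as explicit words `cᵢ(C)` in `A ∗ A`; this gives a monomial representation
`Ψ : B̄₆ → (A ∗ A) ≀ S₂₀`, `Ψ σᵢ = (cᵢ, σᵢ)`, whose diagonal entry at the coset `H` restricts to
a homomorphism `ψ : H → A ∗ A`. Explicit braid words for the generators of the two copies of
`A` define `φ : A ∗ A → H`, and `ψ ∘ φ = id` is checked on generators. The identity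
`σᵢ t_C = t_{σᵢC} φ(cᵢ(σᵢC))` propagates to `t t_C = t_{tC} φ(Ψ(t)_{tC})` for every braid `t`;
for `t ∈ H` and `C = H`, where `t_H = 1`, it reads `φ (ψ t) = t`.

All identities between the finitely many explicit words hold in right-angled Coxeter groups
(`B̄₆` and `A ∗ A` both are), and are certified by `decide` via a normal form for such words.
-/

namespace RightAngledWord

variable {k : ℕ} (E : Fin k → Fin k → Bool)

def pullOut (x : Fin k) : List (Fin k) → Option (List (Fin k))
  | [] => none
  | y :: t => if y = x then some t else if E x y then (pullOut x t).map (y :: ·) else none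

def cancelOnce : List (Fin k) → Option (List (Fin k))
  | [] => none
  | x :: w =>
    match pullOut E x w with
    | some w' => some w'
    | none => (cancelOnce w).map (x :: ·)

def cancelAll : ℕ → List (Fin k) → List (Fin k)
  | 0, w => w
  | n + 1, w =>
    match cancelOnce E w with
    | none => w
    | some w' => cancelAll n w'

def pullFirst : List (Fin k) → List (Fin k) → Option (Fin k × List (Fin k))
  | [], _ => none
  | x :: xs, w =>
    match pullOut E x w with
    | some w' => some (x, w')
    | none => pullFirst xs w

def sortCanon : ℕ → List (Fin k) → List (Fin k)
  | 0, w => w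
  | n + 1, w =>
    match pullFirst E (List.finRange k) w with
    | none => w
    | some (x, w') => x :: sortCanon n w'

/-- A normal form for right-angled Coxeter groups; only its soundness is proved and used. -/
def normalize (w : List (Fin k)) : List (Fin k) :=
  let w' := cancelAll E w.length w
  sortCanon E w'.length w'

variable {E} {G : Type*} [Group G] {f : Fin k → G}

theorem prod_eq_mul_of_pullOut_eq_some (hcomm : ∀ i j, E i j = true → Commute (f i) (f j))
    {x : Fin k} : ∀ {w w' : List (Fin k)}, pullOut E x w = some w' →
      (w.map f).prod = f x * (w'.map f).prod
  | y :: t, w', h => by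
    unfold pullOut at h
    split_ifs at h with hy hE
    · cases hy; cases h; rfl
    · obtain ⟨t', ht, rfl⟩ := Option.map_eq_some_iff.mp h
      simp only [List.map_cons, List.prod_cons, prod_eq_mul_of_pullOut_eq_some hcomm ht]
      exact (hcomm x y hE).symm.left_comm _

theorem prod_eq_of_cancelOnce_eq_some (hsq : ∀ i, f i * f i = 1)
    (hcomm : ∀ i j, E i j = true → Commute (f i) (f j)) :
    ∀ {w w' : List (Fin k)}, cancelOnce E w = some w' → (w.map f).prod = (w'.map f).prod
  | x :: t, w', h => by
    unfold cancelOnce at h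
    split at h
    · next t' hp =>
      cases h
      rw [List.map_cons, List.prod_cons, prod_eq_mul_of_pullOut_eq_some hcomm hp, ← mul_assoc,
        hsq, one_mul]
    · obtain ⟨t', ht, rfl⟩ := Option.map_eq_some_iff.mp h
      simp only [List.map_cons, List.prod_cons, prod_eq_of_cancelOnce_eq_some hsq hcomm ht]

theorem prod_map_cancelAll (hsq : ∀ i, f i * f i = 1)
    (hcomm : ∀ i j, E i j = true → Commute (f i) (f j)) :
    ∀ (n : ℕ) (w : List (Fin k)), ((cancelAll E n w).map f).prod = (w.map f).prod
  | 0, _ => rfl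
  | n + 1, w => by
    unfold cancelAll
    split
    · rfl
    · next w' hw =>
      rw [prod_map_cancelAll hsq hcomm n w', prod_eq_of_cancelOnce_eq_some hsq hcomm hw]

theorem prod_eq_mul_of_pullFirst_eq_some (hcomm : ∀ i j, E i j = true → Commute (f i) (f j)) :
    ∀ {l w : List (Fin k)} {x : Fin k} {w' : List (Fin k)}, pullFirst E l w = some (x, w') →
      (w.map f).prod = f x * (w'.map f).prod
  | y :: ys, w, x, w', h => by
    unfold pullFirst at h
    split at h
    · next t' hp =>
      cases h
      exact prod_eq_mul_of_pullOut_eq_some hcomm hp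
    · exact prod_eq_mul_of_pullFirst_eq_some hcomm h

theorem prod_map_sortCanon (hcomm : ∀ i j, E i j = true → Commute (f i) (f j)) :
    ∀ (n : ℕ) (w : List (Fin k)), ((sortCanon E n w).map f).prod = (w.map f).prod
  | 0, _ => rfl
  | n + 1, w => by
    unfold sortCanon
    split
    · rfl
    · next x w' hw =>
      rw [List.map_cons, List.prod_cons, prod_map_sortCanon hcomm n w',
        prod_eq_mul_of_pullFirst_eq_some hcomm hw]

theorem prod_map_normalize (hsq : ∀ i, f i * f i = 1)
    (hcomm : ∀ i j, E i j = true → Commute (f i) (f j)) (w : List (Fin k)) :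
    ((normalize E w).map f).prod = (w.map f).prod := by
  rw [normalize, prod_map_sortCanon hcomm, prod_map_cancelAll hsq hcomm]

theorem prod_map_eq_of_normalize_eq (hsq : ∀ i, f i * f i = 1)
    (hcomm : ∀ i j, E i j = true → Commute (f i) (f j)) {w₁ w₂ : List (Fin k)}
    (h : normalize E w₁ = normalize E w₂) : (w₁.map f).prod = (w₂.map f).prod := by
  rw [← prod_map_normalize hsq hcomm w₁, ← prod_map_normalize hsq hcomm w₂, h]

end RightAngledWord

open RightAngledWord

namespace PresentedGroup

variable {α : Type*} {rels : Set (FreeGroup α)}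

theorem of_mul_self_eq_one {i : α} (h : FreeGroup.of i * FreeGroup.of i ∈ rels) :
    (of i : PresentedGroup rels) * of i = 1 :=
  (map_mul _ _ _).symm.trans (one_of_mem h)

theorem commute_of_of {i j : α}
    (h : FreeGroup.of i * FreeGroup.of j * (FreeGroup.of i)⁻¹ * (FreeGroup.of j)⁻¹ ∈ rels) :
    Commute (of i : PresentedGroup rels) (of j) := by
  have h1 := one_of_mem h
  simp only [map_mul, map_inv] at h1
  exact commutatorElement_eq_one_iff_commute.mp h1

theorem range_le_of_forall_of_mem {G : Type*} [Group G] (φ : PresentedGroup rels →* G)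
    {K : Subgroup G} (h : ∀ i, φ (of i) ∈ K) : φ.range ≤ K := by
  rintro _ ⟨x, rfl⟩
  exact generated_by rels (K.comap φ) h x

theorem mclosure_range_of_eq_top (h : ∀ i, (of i : PresentedGroup rels) * of i = 1) :
    Submonoid.closure (Set.range (of : α → PresentedGroup rels)) = ⊤ := by
  have hinv : (Set.range (of : α → PresentedGroup rels))⁻¹ = Set.range of := by
    rw [Set.inv_range]
    exact congrArg Set.range (funext fun i => inv_eq_of_mul_eq_one_right (h i))
  rw [← Set.union_self (Set.range of), ← congrArg (_ ∪ ·) hinv,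
    ← Subgroup.closure_toSubmonoid, closure_range_of, Subgroup.top_toSubmonoid]

end PresentedGroup

theorem FreeGroup.lift_commutator_eq_one {α G : Type*} [Group G] {f : α → G} {i j : α}
    (h : Commute (f i) (f j)) :
    FreeGroup.lift f (.of i * .of j * (.of i)⁻¹ * (.of j)⁻¹) = 1 := by
  simpa only [_root_.map_mul, _root_.map_inv, lift_apply_of, commutatorElement_def] using
    commutatorElement_eq_one_iff_commute.mpr h

theorem apply_perm_eq_smul_of_closure_eq_top {G P α β : Type*} [Group G] [Group P]
    [MulAction P β] {S : Set G} (hS : Subgroup.closure S = ⊤) (ρ : G →* Equiv.Perm α)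
    (π : G →* P) (f : α → β) (h : ∀ g ∈ S, ∀ a, f (ρ g a) = π g • f a) (g : G) (a : α) :
    f (ρ g a) = π g • f a := by
  have hg : g ∈ Subgroup.closure S := hS ▸ Subgroup.mem_top g
  induction hg using Subgroup.closure_induction generalizing a with
  | mem g hg => exact h g hg a
  | one => simp
  | mul g g' _ _ ih ih' => rw [map_mul, map_mul, Equiv.Perm.mul_apply, ih, ih', mul_smul]
  | inv g _ ih =>
    rw [map_inv, map_inv, eq_inv_smul_iff, ← ih, Equiv.Perm.coe_inv, Equiv.apply_symm_apply]

section Wreath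

variable {K ι : Type*} [Group K]

theorem wreath_mul_left_apply (x y : (ι → K) ⋊[mulAutArrow] Equiv.Perm ι) (c : ι) :
    (x * y).left c = x.left c * y.left (x.right⁻¹ c) :=
  rfl

theorem wreath_mul_left_apply_of_apply_eq (x y : (ι → K) ⋊[mulAutArrow] Equiv.Perm ι) {c : ι}
    (hc : x.right c = c) : (x * y).left c = x.left c * y.left c := by
  rw [wreath_mul_left_apply, Equiv.Perm.inv_eq_iff_eq.mpr hc.symm]

end Wreath

def twinCommutes (n : ℕ) (i j : Fin n) : Bool :=
  decide ((i : ℕ) + 1 < j) || decide ((j : ℕ) + 1 < i)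

namespace TwinGroup

variable {n : ℕ}

theorem of_mul_self (i : Fin n) : (PresentedGroup.of i : TwinGroup n) * .of i = 1 :=
  PresentedGroup.of_mul_self_eq_one (Or.inl ⟨i, rfl⟩)

theorem commute_of_of {i j : Fin n} (h : twinCommutes n i j = true) :
    Commute (PresentedGroup.of i : TwinGroup n) (.of j) := by
  simp only [twinCommutes, Bool.or_eq_true, decide_eq_true_eq] at h
  rcases h with h | h
  · exact PresentedGroup.commute_of_of (Or.inr ⟨i, j, h, rfl⟩)
  · exact (PresentedGroup.commute_of_of (Or.inr ⟨j, i, h, rfl⟩)).symm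

variable {G : Type*} [Group G] {f : Fin n → G}

theorem lift_eq_one_of_mem_twinRels (hsq : ∀ i, f i * f i = 1)
    (hcomm : ∀ i j : Fin n, (i : ℕ) + 1 < j → Commute (f i) (f j)) :
    ∀ r ∈ twinRels n, FreeGroup.lift f r = 1 := by
  rintro r (⟨i, rfl⟩ | ⟨i, j, hij, rfl⟩)
  · simpa only [map_mul, FreeGroup.lift_apply_of] using hsq i
  · exact FreeGroup.lift_commutator_eq_one (hcomm i j hij)

def lift (f : Fin n → G) (hsq : ∀ i, f i * f i = 1)
    (hcomm : ∀ i j : Fin n, (i : ℕ) + 1 < j → Commute (f i) (f j)) : TwinGroup n →* G :=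
  PresentedGroup.toGroup (lift_eq_one_of_mem_twinRels hsq hcomm)

theorem lift_of (hsq : ∀ i, f i * f i = 1)
    (hcomm : ∀ i j : Fin n, (i : ℕ) + 1 < j → Commute (f i) (f j)) (i : Fin n) :
    lift f hsq hcomm (.of i) = f i :=
  PresentedGroup.toGroup.of _

theorem twinPerm_of (i : Fin n) : twinPerm n (.of i) = Equiv.swap i.castSucc i.succ :=
  PresentedGroup.toGroup.of _

end TwinGroup

def commutesA (i j : Fin 8) : Bool :=
  decide ((i, j) ∈ commPairs ∨ (j, i) ∈ commPairs)

namespace GroupA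

theorem of_mul_self (i : Fin 8) : (PresentedGroup.of i : GroupA) * .of i = 1 :=
  PresentedGroup.of_mul_self_eq_one (Or.inl ⟨i, rfl⟩)

theorem commute_of_of {i j : Fin 8} (h : commutesA i j = true) :
    Commute (PresentedGroup.of i : GroupA) (.of j) := by
  simp only [commutesA, decide_eq_true_eq] at h
  rcases h with h | h
  · exact PresentedGroup.commute_of_of (Or.inr ⟨(i, j), h, rfl⟩)
  · exact (PresentedGroup.commute_of_of (Or.inr ⟨(j, i), h, rfl⟩)).symm

variable {G : Type*} [Group G] {f : Fin 8 → G}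

theorem lift_eq_one_of_mem_ARels (hsq : ∀ i, f i * f i = 1)
    (hcomm : ∀ i j, commutesA i j = true → Commute (f i) (f j)) :
    ∀ r ∈ ARels, FreeGroup.lift f r = 1 := by
  rintro r (⟨i, rfl⟩ | ⟨p, hp, rfl⟩)
  · simpa only [map_mul, FreeGroup.lift_apply_of] using hsq i
  · refine FreeGroup.lift_commutator_eq_one (hcomm _ _ ?_)
    simp [commutesA, hp]

def lift (f : Fin 8 → G) (hsq : ∀ i, f i * f i = 1)
    (hcomm : ∀ i j, commutesA i j = true → Commute (f i) (f j)) : GroupA →* G :=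
  PresentedGroup.toGroup (lift_eq_one_of_mem_ARels hsq hcomm)

theorem lift_of (hsq : ∀ i, f i * f i = 1)
    (hcomm : ∀ i j, commutesA i j = true → Commute (f i) (f j)) (i : Fin 8) :
    lift f hsq hcomm (.of i) = f i :=
  PresentedGroup.toGroup.of _

end GroupA

open scoped Monoid.Coprod

/-- Letters `0, …, 7` stand for the generators of the left factor, `8, …, 15` for those of the
right one. -/
def coprodGen (l : Fin 16) : GroupA ∗ GroupA :=
  if (l : ℕ) < 8 then .inl (.of ⟨l % 8, by omega⟩) else .inr (.of ⟨l % 8, by omega⟩)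

def commutesAA (l m : Fin 16) : Bool :=
  ((l : ℕ) / 8 == (m : ℕ) / 8) && commutesA ⟨l % 8, by omega⟩ ⟨m % 8, by omega⟩

theorem coprodGen_castAdd (j : Fin 8) : coprodGen (Fin.castAdd 8 j) = .inl (.of j) := by
  simp [coprodGen, Nat.mod_eq_of_lt j.isLt]

theorem coprodGen_natAdd (j : Fin 8) : coprodGen (Fin.natAdd 8 j) = .inr (.of j) := by
  simp [coprodGen, Nat.mod_eq_of_lt j.isLt]

theorem coprodGen_mul_self (l : Fin 16) : coprodGen l * coprodGen l = 1 := by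
  unfold coprodGen
  split_ifs <;> rw [← map_mul, GroupA.of_mul_self, map_one]

theorem commute_coprodGen {l m : Fin 16} (h : commutesAA l m = true) :
    Commute (coprodGen l) (coprodGen m) := by
  simp only [commutesAA, Bool.and_eq_true, beq_iff_eq] at h
  obtain ⟨hside, hlm⟩ := h
  unfold coprodGen
  split_ifs <;> first | omega | exact (GroupA.commute_of_of hlm).map _

def twinWord (u : List (Fin 5)) : TwinGroup 5 :=
  (u.map PresentedGroup.of).prod

def coprodWord (w : List (Fin 16)) : GroupA ∗ GroupA :=
  (w.map coprodGen).prod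

theorem twinWord_eq_of_normalize_eq {u v : List (Fin 5)}
    (h : normalize (twinCommutes 5) u = normalize (twinCommutes 5) v) :
    twinWord u = twinWord v :=
  prod_map_eq_of_normalize_eq TwinGroup.of_mul_self
    (fun _ _ => TwinGroup.commute_of_of) h

theorem coprodWord_eq_of_normalize_eq {w w' : List (Fin 16)}
    (h : normalize commutesAA w = normalize commutesAA w') :
    coprodWord w = coprodWord w' :=
  prod_map_eq_of_normalize_eq coprodGen_mul_self
    (fun _ _ => commute_coprodGen) h

def generatorWord (l : Fin 16) : List (Fin 5) :=
  [[0], [1], [3], [4], [2, 1, 0, 1, 0, 1, 2], [2, 1, 2, 1, 2], [2, 3, 2, 3, 2],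
   [2, 3, 4, 3, 4, 3, 2], [2, 1, 0, 3, 2, 1, 0, 1, 0, 2, 1, 3, 2], [2, 1, 3, 2, 1, 2, 1, 3, 2],
   [2, 1, 3, 2, 3, 2, 1, 3, 2], [2, 1, 3, 2, 4, 3, 4, 3, 2, 1, 4, 3, 2],
   [2, 1, 0, 3, 2, 1, 4, 3, 2, 1, 2, 1, 0, 3, 2, 1, 4, 3, 2],
   [2, 1, 3, 2, 4, 3, 2, 3, 2, 1, 4, 3, 2], [2, 1, 0, 3, 2, 1, 2, 1, 0, 2, 1, 3, 2],
   [2, 1, 0, 3, 2, 1, 4, 3, 2, 3, 2, 1, 0, 3, 2, 1, 4, 3, 2]].getD l []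

/-- Coset `C` of the bicoloured subgroup consists of the braids whose permutation maps `{0, 1, 2}`
onto the `C`-th of these sets. -/
def cosetSubset (C : Fin 20) : List (Fin 6) :=
  [[0, 1, 2], [0, 1, 3], [0, 2, 3], [0, 1, 4], [1, 2, 3], [0, 2, 4], [0, 1, 5], [1, 2, 4],
   [0, 2, 5], [0, 3, 4], [1, 2, 5], [1, 3, 4], [0, 3, 5], [1, 3, 5], [2, 3, 4], [0, 4, 5],
   [1, 4, 5], [2, 3, 5], [2, 4, 5], [3, 4, 5]].getD C []

def cosetAct (i : Fin 5) (C : Fin 20) : Fin 20 :=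
  let table : List (List (Fin 20)) :=
    [[0, 1, 4, 3, 2, 7, 6, 5, 10, 11, 8, 9, 13, 12, 14, 16, 15, 17, 18, 19],
     [0, 2, 1, 5, 4, 3, 8, 7, 6, 9, 10, 14, 12, 17, 11, 15, 18, 13, 16, 19],
     [1, 0, 2, 3, 4, 9, 6, 11, 12, 5, 13, 7, 8, 10, 14, 15, 16, 17, 19, 18],
     [0, 3, 5, 1, 7, 2, 6, 4, 8, 9, 10, 11, 15, 16, 14, 12, 13, 18, 17, 19],
     [0, 1, 2, 6, 4, 8, 3, 10, 5, 12, 7, 13, 9, 11, 17, 15, 16, 14, 18, 19]]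
  (table.getD i []).getD C 0

def transversalWord (C : Fin 20) : List (Fin 5) :=
  [[], [2], [1, 2], [3, 2], [0, 1, 2], [1, 3, 2], [4, 3, 2], [0, 1, 3, 2], [1, 4, 3, 2],
   [2, 1, 3, 2], [0, 1, 4, 3, 2], [0, 2, 1, 3, 2], [2, 1, 4, 3, 2], [0, 2, 1, 4, 3, 2],
   [1, 0, 2, 1, 3, 2], [3, 2, 1, 4, 3, 2], [0, 3, 2, 1, 4, 3, 2], [1, 0, 2, 1, 4, 3, 2],
   [1, 0, 3, 2, 1, 4, 3, 2], [2, 1, 0, 3, 2, 1, 4, 3, 2]].getD C []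

/-- A word in `A ∗ A` for the Schreier generator `t_C⁻¹ σᵢ t_{σᵢC}`, where
`t_C = twinWord (transversalWord C)`. -/
def schreierWord (i : Fin 5) (C : Fin 20) : List (Fin 16) :=
  let table : List (List (List (Fin 16))) :=
    [[[0], [0], [], [0], [], [], [0], [], [], [], [], [], [], [], [8], [], [], [8], [8], [8]],
     [[1], [], [], [], [4], [], [], [4], [], [9], [4], [], [9], [], [], [9], [], [], [], [12]],
     [[], [], [5], [6], [5], [], [6], [], [], [], [], [], [], [], [14], [13], [13], [14], [], []],
     [[2], [], [], [], [], [], [7], [], [7], [10], [7], [10], [], [], [10], [], [], [], [], [15]],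
     [[3], [3], [3], [], [3], [], [], [], [], [], [], [], [], [], [], [11], [11], [], [11], [11]]]
  (table.getD i []).getD C []

def schreierPath : List (Fin 5) → Fin 20 → List (Fin 16)
  | [], _ => []
  | i :: u, C => schreierWord i C ++ schreierPath u (cosetAct i C)

theorem twinWord_cons (i : Fin 5) (u : List (Fin 5)) :
    twinWord (i :: u) = .of i * twinWord u :=
  List.prod_cons

theorem twinWord_append (u v : List (Fin 5)) : twinWord (u ++ v) = twinWord u * twinWord v := by
  simp [twinWord]

theorem coprodWord_cons (l : Fin 16) (w : List (Fin 16)) :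
    coprodWord (l :: w) = coprodGen l * coprodWord w :=
  List.prod_cons

theorem coprodWord_append (w w' : List (Fin 16)) :
    coprodWord (w ++ w') = coprodWord w * coprodWord w' := by
  simp [coprodWord]

theorem cosetAct_cosetAct : ∀ i C, cosetAct i (cosetAct i C) = C := by
  decide

theorem cosetAct_comm : ∀ i j : Fin 5, (i : ℕ) + 1 < j →
    ∀ C, cosetAct i (cosetAct j C) = cosetAct j (cosetAct i C) := by
  decide

theorem mem_cosetSubset_cosetAct : ∀ i C v,
    v ∈ cosetSubset (cosetAct i C) ↔ Equiv.swap i.castSucc i.succ v ∈ cosetSubset C := by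
  decide

theorem cosetSubset_injective : ∀ C D,
    (∀ v, v ∈ cosetSubset C ↔ v ∈ cosetSubset D) → C = D := by
  decide

theorem normalize_schreierWord_append_self : ∀ i C,
    normalize commutesAA (schreierWord i C ++ schreierWord i (cosetAct i C)) = [] := by
  decide

theorem normalize_schreierWord_comm : ∀ i j : Fin 5, (i : ℕ) + 1 < j → ∀ C,
    normalize commutesAA (schreierWord i C ++ schreierWord j (cosetAct i C)) =
      normalize commutesAA (schreierWord j C ++ schreierWord i (cosetAct j C)) := by
  decide

theorem commutesAA_castAdd : ∀ i j : Fin 8,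
    commutesAA (Fin.castAdd 8 i) (Fin.castAdd 8 j) = commutesA i j := by
  decide

theorem commutesAA_natAdd : ∀ i j : Fin 8,
    commutesAA (Fin.natAdd 8 i) (Fin.natAdd 8 j) = commutesA i j := by
  decide

theorem normalize_generatorWord_append_self : ∀ l,
    normalize (twinCommutes 5) (generatorWord l ++ generatorWord l) = [] := by
  decide

theorem normalize_generatorWord_comm : ∀ l m, commutesAA l m = true →
    normalize (twinCommutes 5) (generatorWord l ++ generatorWord m) =
      normalize (twinCommutes 5) (generatorWord m ++ generatorWord l) := by
  decide

theorem normalize_cons_transversalWord : ∀ i C,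
    normalize (twinCommutes 5) (i :: transversalWord C) =
      normalize (twinCommutes 5) (transversalWord (cosetAct i C) ++
        (schreierWord i (cosetAct i C)).flatMap generatorWord) := by
  decide

theorem foldr_cosetAct_generatorWord : ∀ l, (generatorWord l).foldr cosetAct 0 = 0 := by
  decide

theorem normalize_schreierPath_generatorWord : ∀ l,
    normalize commutesAA (schreierPath (generatorWord l) 0) = normalize commutesAA [l] := by
  decide

def schreierGen (i : Fin 5) : (Fin 20 → GroupA ∗ GroupA) ⋊[mulAutArrow] Equiv.Perm (Fin 20) :=
  ⟨fun C => coprodWord (schreierWord i C), Function.Involutive.toPerm _ (cosetAct_cosetAct i)⟩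

theorem schreierGen_mul_self (i : Fin 5) : schreierGen i * schreierGen i = 1 := by
  refine SemidirectProduct.ext (funext fun C => ?_) (Equiv.ext (cosetAct_cosetAct i))
  show coprodWord (schreierWord i C) * coprodWord (schreierWord i (cosetAct i C)) = 1
  rw [← coprodWord_append, coprodWord_eq_of_normalize_eq (w' := [])
    (normalize_schreierWord_append_self i C)]
  rfl

theorem commute_schreierGen {i j : Fin 5} (h : (i : ℕ) + 1 < j) :
    Commute (schreierGen i) (schreierGen j) := by
  refine SemidirectProduct.ext (funext fun C => ?_) (Equiv.ext (cosetAct_comm i j h))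
  show coprodWord (schreierWord i C) * coprodWord (schreierWord j (cosetAct i C)) =
    coprodWord (schreierWord j C) * coprodWord (schreierWord i (cosetAct j C))
  rw [← coprodWord_append, ← coprodWord_append]
  exact coprodWord_eq_of_normalize_eq (normalize_schreierWord_comm i j h C)

def schreierRep :
    TwinGroup 5 →* (Fin 20 → GroupA ∗ GroupA) ⋊[mulAutArrow] Equiv.Perm (Fin 20) :=
  TwinGroup.lift schreierGen schreierGen_mul_self fun _ _ => commute_schreierGen

theorem schreierRep_of (i : Fin 5) : schreierRep (.of i) = schreierGen i :=
  TwinGroup.lift_of _ _ i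

theorem schreierRep_of_mul_right (i : Fin 5) (t : TwinGroup 5) (C : Fin 20) :
    (schreierRep (.of i * t)).right C = cosetAct i ((schreierRep t).right C) := by
  rw [map_mul, schreierRep_of]
  rfl

theorem schreierRep_of_mul_left (i : Fin 5) (t : TwinGroup 5) (C : Fin 20) :
    (schreierRep (.of i * t)).left C =
      coprodWord (schreierWord i C) * (schreierRep t).left (cosetAct i C) := by
  rw [map_mul, schreierRep_of]
  rfl

theorem schreierRep_twinWord_right (u : List (Fin 5)) (C : Fin 20) :
    (schreierRep (twinWord u)).right C = u.foldr cosetAct C := by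
  induction u with
  | nil => simp [twinWord]
  | cons i u ih => rw [twinWord_cons, schreierRep_of_mul_right, ih, List.foldr_cons]

theorem schreierRep_twinWord_left (u : List (Fin 5)) (C : Fin 20) :
    (schreierRep (twinWord u)).left C = coprodWord (schreierPath u C) := by
  induction u generalizing C with
  | nil => simp [twinWord, coprodWord, schreierPath]
  | cons i u ih => rw [twinWord_cons, schreierRep_of_mul_left, ih, schreierPath, coprodWord_append]

open Pointwise in
abbrev bicoloured : Subgroup (TwinGroup 5) :=
  Subgroup.comap (twinPerm 5)
    (MulAction.stabilizer (Equiv.Perm (Fin 6)) ({0, 1, 2} : Set (Fin 6)))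

def cosetSet (C : Fin 20) : Set (Fin 6) :=
  {v | v ∈ cosetSubset C}

open Pointwise in
theorem cosetSet_schreierRep_right (t : TwinGroup 5) (C : Fin 20) :
    cosetSet ((schreierRep t).right C) = twinPerm 5 t • cosetSet C := by
  refine apply_perm_eq_smul_of_closure_eq_top (PresentedGroup.closure_range_of _)
    (SemidirectProduct.rightHom.comp schreierRep) (twinPerm 5) cosetSet ?_ t C
  rintro _ ⟨i, rfl⟩ C
  ext v
  rw [MonoidHom.comp_apply, schreierRep_of, Set.mem_smul_set_iff_inv_smul_mem,
    TwinGroup.twinPerm_of, Equiv.swap_inv]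
  exact mem_cosetSubset_cosetAct i C v

theorem cosetSet_injective : Function.Injective cosetSet := fun C D h =>
  cosetSubset_injective C D fun v => Set.ext_iff.mp h v

theorem cosetSet_zero : cosetSet 0 = {0, 1, 2} := by
  ext v
  fin_cases v <;> simp [cosetSet, cosetSubset]

open Pointwise in
theorem mem_bicoloured_iff (t : TwinGroup 5) :
    t ∈ bicoloured ↔ (schreierRep t).right 0 = 0 := by
  rw [Subgroup.mem_comap, MulAction.mem_stabilizer_iff, ← cosetSet_zero,
    ← cosetSet_schreierRep_right, cosetSet_injective.eq_iff]

def bicolouredToCoprod : bicoloured →* GroupA ∗ GroupA where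
  toFun t := (schreierRep t).left 0
  map_one' := by
    rw [OneMemClass.coe_one, map_one]
    rfl
  map_mul' s t := by
    rw [Subgroup.coe_mul, map_mul]
    exact wreath_mul_left_apply_of_apply_eq _ _ ((mem_bicoloured_iff s).mp s.2)

theorem twinWord_generatorWord_mul_self (l : Fin 16) :
    twinWord (generatorWord l) * twinWord (generatorWord l) = 1 := by
  rw [← twinWord_append, twinWord_eq_of_normalize_eq (v := [])
    (normalize_generatorWord_append_self l)]
  rfl

theorem commute_twinWord_generatorWord {l m : Fin 16} (h : commutesAA l m = true) :
    Commute (twinWord (generatorWord l)) (twinWord (generatorWord m)) := by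
  rw [Commute, SemiconjBy, ← twinWord_append, ← twinWord_append]
  exact twinWord_eq_of_normalize_eq (normalize_generatorWord_comm l m h)

def coprodToTwin : GroupA ∗ GroupA →* TwinGroup 5 :=
  Monoid.Coprod.lift
    (GroupA.lift (fun j => twinWord (generatorWord (Fin.castAdd 8 j)))
      (fun _ => twinWord_generatorWord_mul_self _)
      fun i j h => commute_twinWord_generatorWord ((commutesAA_castAdd i j).trans h))
    (GroupA.lift (fun j => twinWord (generatorWord (Fin.natAdd 8 j)))
      (fun _ => twinWord_generatorWord_mul_self _)
      fun i j h => commute_twinWord_generatorWord ((commutesAA_natAdd i j).trans h))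

theorem coprodToTwin_coprodGen (l : Fin 16) :
    coprodToTwin (coprodGen l) = twinWord (generatorWord l) := by
  revert l
  show ∀ l : Fin (8 + 8), _
  refine Fin.addCases (fun j => ?_) (fun j => ?_)
  · rw [coprodGen_castAdd, coprodToTwin, Monoid.Coprod.lift_apply_inl, GroupA.lift_of]
  · rw [coprodGen_natAdd, coprodToTwin, Monoid.Coprod.lift_apply_inr, GroupA.lift_of]

theorem coprodToTwin_coprodWord (w : List (Fin 16)) :
    coprodToTwin (coprodWord w) = twinWord (w.flatMap generatorWord) := by
  induction w with
  | nil => simp [coprodWord, twinWord]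
  | cons l w ih =>
    rw [coprodWord_cons, map_mul, ih, coprodToTwin_coprodGen, List.flatMap_cons, twinWord_append]

theorem of_mul_twinWord_transversalWord (i : Fin 5) (C : Fin 20) :
    .of i * twinWord (transversalWord C) = twinWord (transversalWord (cosetAct i C)) *
      coprodToTwin (coprodWord (schreierWord i (cosetAct i C))) := by
  rw [coprodToTwin_coprodWord, ← twinWord_append, ← twinWord_cons]
  exact twinWord_eq_of_normalize_eq (normalize_cons_transversalWord i C)

theorem mul_twinWord_transversalWord (t : TwinGroup 5) (C : Fin 20) :
    t * twinWord (transversalWord C) = twinWord (transversalWord ((schreierRep t).right C)) *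
      coprodToTwin ((schreierRep t).left ((schreierRep t).right C)) := by
  have ht : t ∈ Submonoid.closure (Set.range PresentedGroup.of) := by
    rw [PresentedGroup.mclosure_range_of_eq_top TwinGroup.of_mul_self]
    exact Submonoid.mem_top t
  induction ht using Submonoid.closure_induction_left generalizing C with
  | one => simp
  | mul_left _ hx t _ ih =>
    obtain ⟨i, rfl⟩ := hx
    rw [schreierRep_of_mul_right, schreierRep_of_mul_left, cosetAct_cosetAct, map_mul, mul_assoc,
      ih, ← mul_assoc, ← mul_assoc, of_mul_twinWord_transversalWord]

theorem coprodToTwin_mem_bicoloured (x : GroupA ∗ GroupA) : coprodToTwin x ∈ bicoloured := by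
  have hgen : ∀ l, twinWord (generatorWord l) ∈ bicoloured := fun l => by
    rw [mem_bicoloured_iff, schreierRep_twinWord_right, foldr_cosetAct_generatorWord]
  have hrange : coprodToTwin.range ≤ bicoloured := by
    rw [coprodToTwin, Monoid.Coprod.range_lift]
    exact sup_le
      (PresentedGroup.range_le_of_forall_of_mem _ fun j => by rw [GroupA.lift_of]; exact hgen _)
      (PresentedGroup.range_le_of_forall_of_mem _ fun j => by rw [GroupA.lift_of]; exact hgen _)
  exact hrange ⟨x, rfl⟩

def coprodToBicoloured : GroupA ∗ GroupA →* bicoloured :=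
  coprodToTwin.codRestrict _ coprodToTwin_mem_bicoloured

theorem bicolouredToCoprod_coprodToBicoloured_coprodGen (l : Fin 16) :
    bicolouredToCoprod (coprodToBicoloured (coprodGen l)) = coprodGen l := by
  show (schreierRep (coprodToTwin (coprodGen l))).left 0 = coprodGen l
  rw [coprodToTwin_coprodGen, schreierRep_twinWord_left,
    coprodWord_eq_of_normalize_eq (normalize_schreierPath_generatorWord l), coprodWord_cons]
  exact mul_one _

theorem bicolouredToCoprod_comp_coprodToBicoloured :
    bicolouredToCoprod.comp coprodToBicoloured = MonoidHom.id _ :=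
  Monoid.Coprod.hom_ext
    (PresentedGroup.ext fun j => by
      simpa only [MonoidHom.comp_apply, MonoidHom.id_apply, coprodGen_castAdd] using
        bicolouredToCoprod_coprodToBicoloured_coprodGen (Fin.castAdd 8 j))
    (PresentedGroup.ext fun j => by
      simpa only [MonoidHom.comp_apply, MonoidHom.id_apply, coprodGen_natAdd] using
        bicolouredToCoprod_coprodToBicoloured_coprodGen (Fin.natAdd 8 j))

theorem coprodToBicoloured_comp_bicolouredToCoprod :
    coprodToBicoloured.comp bicolouredToCoprod = MonoidHom.id _ := by
  refine MonoidHom.ext fun t => Subtype.ext ?_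
  show coprodToTwin ((schreierRep t).left 0) = t
  have h := mul_twinWord_transversalWord t 0
  rw [(mem_bicoloured_iff t).mp t.2] at h
  simpa [transversalWord, twinWord] using h.symm

open Pointwise in
/-- **Proposition 4.** The subgroup `H ≤ B̄₆` of bicoloured braids — those whose underlying
permutation maps the set `{1, 2, 3}` (here `{0, 1, 2} ⊆ Fin 6`) to itself — is isomorphic
to the free product `A * A` of two copies of the group `A`. -/
theorem bicoloured_iso_coprod :
    Nonempty ((Subgroup.comap (twinPerm 5)
        (MulAction.stabilizer (Equiv.Perm (Fin 6)) ({0, 1, 2} : Set (Fin 6)))) ≃*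
      Monoid.Coprod GroupA GroupA) :=
  ⟨MonoidHom.toMulEquiv bicolouredToCoprod coprodToBicoloured
    coprodToBicoloured_comp_bicolouredToCoprod bicolouredToCoprod_comp_coprodToBicoloured⟩
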